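/- arXiv:1209.1144 — 2 statements merged into one kernel-verified Lean document; each statement's English description precedes it below -/
import Mathlib

section
/- (Stability of viscosity solutions) Let Ω ⊆ ℝⁿ be open and 0 < λ ≤ Λ. Let u_k, g_k : Ω → ℝ be sequences of continuous functions such that each u_k is a viscosity solution (respectively subsolution, respectively supersolution) of M⁺_{λ,Λ}(D²u_k) + g_k = 0 in Ω. If u_k → u and g_k → g uniformly on every compact subset of Ω, then u is a viscosity solution (respectively subsolution, respectively supersolution) of M⁺_{λ,Λ}(D²u) + g = 0 in Ω. -/
/-!
A test function `φ` touching `u` from above at `x₀` is replaced by `ψ = φ + ‖x - x₀‖ ^ 4`, which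
makes the maximum of `u - ψ` strict without changing the Hessian at `x₀`. Maxima of `uₖ - ψ` on a
small closed ball then converge to `x₀`, so they are eventually interior local maxima, where the
subsolution inequality for `uₖ` holds; it passes to the limit because `M⁺` is continuous on
symmetric matrices. The latter follows from `M⁺(M) = max {tr (A M) : λ I ≤ A ≤ Λ I}`, which makes
`M⁺` Lipschitz for the operator norm. Supersolutions are handled by applying the same construction
to `-uₖ`.
-/

open scoped BigOperators

/-- The Pucci maximal operator `M⁺_{λ,Λ}`: for a symmetric matrix it equals
`Λ · (sum of positive eigenvalues) + λ · (sum of negative eigenvalues)`. -/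
noncomputable def pucciMax (lam Lam : ℝ) {n : ℕ} (M : Matrix (Fin n) (Fin n) ℝ) : ℝ :=
  if h : M.IsHermitian then
    ∑ i, (Lam * max (h.eigenvalues i) 0 + lam * min (h.eigenvalues i) 0)
  else 0

/-- The Hessian matrix of `φ` at `x`. -/
noncomputable def hess {n : ℕ} (φ : EuclideanSpace ℝ (Fin n) → ℝ)
    (x : EuclideanSpace ℝ (Fin n)) : Matrix (Fin n) (Fin n) ℝ :=
  fun i j => iteratedFDeriv ℝ 2 φ x ![EuclideanSpace.single i 1, EuclideanSpace.single j 1]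

/-- `u` is a viscosity supersolution of `M⁺_{λ,Λ}(D²u) + g = 0` in `Ω`. -/
def PucciSupersol (lam Lam : ℝ) {n : ℕ} (Ω : Set (EuclideanSpace ℝ (Fin n)))
    (u g : EuclideanSpace ℝ (Fin n) → ℝ) : Prop :=
  ∀ x₀ ∈ Ω, ∀ φ : EuclideanSpace ℝ (Fin n) → ℝ, ContDiff ℝ 2 φ →
    IsLocalMin (fun x => u x - φ x) x₀ → pucciMax lam Lam (hess φ x₀) + g x₀ ≤ 0

/-- `u` is a viscosity subsolution of `M⁺_{λ,Λ}(D²u) + g = 0` in `Ω`. -/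
def PucciSubsol (lam Lam : ℝ) {n : ℕ} (Ω : Set (EuclideanSpace ℝ (Fin n)))
    (u g : EuclideanSpace ℝ (Fin n) → ℝ) : Prop :=
  ∀ x₀ ∈ Ω, ∀ φ : EuclideanSpace ℝ (Fin n) → ℝ, ContDiff ℝ 2 φ →
    IsLocalMax (fun x => u x - φ x) x₀ → 0 ≤ pucciMax lam Lam (hess φ x₀) + g x₀

namespace Matrix

variable {n : ℕ} {lam Lam : ℝ}

def IsPucciAdmissible (lam Lam : ℝ) (A : Matrix (Fin n) (Fin n) ℝ) : Prop :=
  (A - lam • 1).PosSemidef ∧ (Lam • 1 - A).PosSemidef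

theorem IsHermitian.trace_mul_eq_sum_mul_eigenvalues {N : Matrix (Fin n) (Fin n) ℝ}
    (hN : N.IsHermitian) (A : Matrix (Fin n) (Fin n) ℝ) :
    (A * N).trace = ∑ i, (star (hN.eigenvectorUnitary : Matrix (Fin n) (Fin n) ℝ) * A *
      hN.eigenvectorUnitary) i i * hN.eigenvalues i := by
  set V : Matrix (Fin n) (Fin n) ℝ := ↑hN.eigenvectorUnitary
  conv_lhs => rw [hN.spectral_theorem, Unitary.conjStarAlgAut_apply]
  rw [← Matrix.mul_assoc, ← Matrix.mul_assoc, trace_mul_cycle, ← Matrix.mul_assoc]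
  simp [trace, mul_diagonal, V]

theorem IsPucciAdmissible.unitary_conj_apply_self_mem_Icc {A : Matrix (Fin n) (Fin n) ℝ}
    (hA : IsPucciAdmissible lam Lam A) (V : unitaryGroup (Fin n) ℝ) (i : Fin n) :
    (star (V : Matrix (Fin n) (Fin n) ℝ) * A * V) i i ∈ Set.Icc lam Lam := by
  have hV : star (V : Matrix (Fin n) (Fin n) ℝ) * V = 1 := Unitary.coe_star_mul_self V
  have h₁ := (hA.1.conjTranspose_mul_mul_same (V : Matrix (Fin n) (Fin n) ℝ)).diag_nonneg (i := i)
  have h₂ := (hA.2.conjTranspose_mul_mul_same (V : Matrix (Fin n) (Fin n) ℝ)).diag_nonneg (i := i)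
  rw [← star_eq_conjTranspose] at h₁ h₂
  simp only [Matrix.mul_sub, Matrix.sub_mul, Matrix.mul_smul, Matrix.smul_mul, hV, sub_apply,
    smul_apply, one_apply_eq, smul_eq_mul, mul_one] at h₁ h₂
  constructor <;> linarith

theorem IsPucciAdmissible.trace_mul_le_pucciMax {A N : Matrix (Fin n) (Fin n) ℝ}
    (hA : IsPucciAdmissible lam Lam A) (hN : N.IsHermitian) :
    (A * N).trace ≤ pucciMax lam Lam N := by
  rw [pucciMax, dif_pos hN, hN.trace_mul_eq_sum_mul_eigenvalues]
  refine Finset.sum_le_sum fun i _ => ?_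
  obtain ⟨hlo, hhi⟩ := hA.unitary_conj_apply_self_mem_Icc hN.eigenvectorUnitary i
  rcases le_total 0 (hN.eigenvalues i) with he | he
  · rw [max_eq_left he, min_eq_right he]; nlinarith
  · rw [max_eq_right he, min_eq_left he]; nlinarith

theorem exists_isPucciAdmissible_trace_mul_eq_pucciMax (hL : lam ≤ Lam)
    {M : Matrix (Fin n) (Fin n) ℝ} (hM : M.IsHermitian) :
    ∃ A, IsPucciAdmissible lam Lam A ∧ (A * M).trace = pucciMax lam Lam M := by
  set V : Matrix (Fin n) (Fin n) ℝ := ↑hM.eigenvectorUnitary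
  have hV : star V * V = 1 := Unitary.coe_star_mul_self hM.eigenvectorUnitary
  have hV' : V * star V = 1 := Unitary.coe_mul_star_self hM.eigenvectorUnitary
  set a : Fin n → ℝ := fun i => if 0 ≤ hM.eigenvalues i then Lam else lam
  have hconst : ∀ c : ℝ, V * diagonal (fun _ => c) * star V = c • 1 := fun c => by
    rw [← smul_one_eq_diagonal, Matrix.mul_smul, Matrix.mul_one, Matrix.smul_mul, hV']
  have hdiag : star V * (V * diagonal a * star V) * V = diagonal a := by
    simp only [← Matrix.mul_assoc, hV, Matrix.one_mul]
    rw [Matrix.mul_assoc, hV, Matrix.mul_one]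
  refine ⟨V * diagonal a * star V, ?_, ?_⟩
  · constructor <;>
    · rw [← hconst, ← Matrix.sub_mul, ← Matrix.mul_sub, diagonal_sub]
      refine (PosSemidef.diagonal fun i => ?_).mul_mul_conjTranspose_same V
      by_cases h : 0 ≤ hM.eigenvalues i <;> simp [a, h, hL]
  · rw [hM.trace_mul_eq_sum_mul_eigenvalues, hdiag, pucciMax, dif_pos hM]
    refine Finset.sum_congr rfl fun i _ => ?_
    rcases le_or_gt 0 (hM.eigenvalues i) with he | he
    · simp [a, he]
    · simp [a, not_le.2 he, he.le]

section L2OpNorm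

open scoped Matrix.Norms.L2Operator

theorem IsHermitian.abs_eigenvalues_le_l2_opNorm {D : Matrix (Fin n) (Fin n) ℝ}
    (hD : D.IsHermitian) (i : Fin n) : |hD.eigenvalues i| ≤ ‖D‖ := by
  have h := D.l2_opNorm_mulVec (hD.eigenvectorBasis i)
  rw [hD.mulVec_eigenvectorBasis, hD.eigenvectorBasis.orthonormal.1 i, mul_one] at h
  simpa [norm_smul] using h

theorem IsPucciAdmissible.trace_mul_le {A D : Matrix (Fin n) (Fin n) ℝ}
    (hA : IsPucciAdmissible lam Lam A) (hD : D.IsHermitian) :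
    (A * D).trace ≤ n * max |lam| |Lam| * ‖D‖ := by
  rw [hD.trace_mul_eq_sum_mul_eigenvalues]
  calc _ ≤ ∑ _i : Fin n, max |lam| |Lam| * ‖D‖ := Finset.sum_le_sum fun i _ => by
          obtain ⟨hlo, hhi⟩ := hA.unitary_conj_apply_self_mem_Icc hD.eigenvectorUnitary i
          refine (le_abs_self _).trans ?_
          rw [abs_mul]
          exact mul_le_mul (abs_le_max_abs_abs hlo hhi) (hD.abs_eigenvalues_le_l2_opNorm i)
            (abs_nonneg _) ((abs_nonneg _).trans (le_max_left _ _))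
    _ = n * max |lam| |Lam| * ‖D‖ := by simp [mul_assoc]

theorem pucciMax_le_add_l2_opNorm (hL : lam ≤ Lam) {M N : Matrix (Fin n) (Fin n) ℝ}
    (hM : M.IsHermitian) (hN : N.IsHermitian) :
    pucciMax lam Lam M ≤ pucciMax lam Lam N + n * max |lam| |Lam| * ‖M - N‖ := by
  obtain ⟨A, hA, hAM⟩ := exists_isPucciAdmissible_trace_mul_eq_pucciMax hL hM
  have hsplit : (A * M).trace = (A * N).trace + (A * (M - N)).trace := by
    rw [Matrix.mul_sub, trace_sub, add_sub_cancel]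
  linarith [hA.trace_mul_le_pucciMax hN, hA.trace_mul_le (hM.sub hN)]

theorem lipschitzOnWith_pucciMax (hL : lam ≤ Lam) :
    LipschitzOnWith ⟨n * max |lam| |Lam|, by positivity⟩ (pucciMax lam Lam)
      {M : Matrix (Fin n) (Fin n) ℝ | M.IsHermitian} :=
  LipschitzOnWith.of_le_add_mul _ fun M hM N hN => by
    rw [dist_eq_norm]
    exact pucciMax_le_add_l2_opNorm hL hM hN

end L2OpNorm

-- The operator-norm metric on matrices is built to induce the usual (product) topology.
theorem continuousOn_pucciMax (hL : lam ≤ Lam) :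
    ContinuousOn (pucciMax lam Lam) {M : Matrix (Fin n) (Fin n) ℝ | M.IsHermitian} := by
  open scoped Matrix.Norms.L2Operator in exact (lipschitzOnWith_pucciMax hL).continuousOn

end Matrix

theorem iteratedFDeriv_two_const_mul_sq_eq_zero {E : Type*} [NormedAddCommGroup E]
    [NormedSpace ℝ E] {q : E → ℝ} {x₀ : E} (hq : ContDiff ℝ 2 q) (hq₀ : q x₀ = 0)
    (hdq₀ : fderiv ℝ q x₀ = 0) (c : ℝ) :
    iteratedFDeriv ℝ 2 (fun x => c * q x ^ 2) x₀ = 0 := by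
  have hdq : ∀ y, HasFDerivAt q (fderiv ℝ q y) y := fun y =>
    (hq.differentiable two_ne_zero y).hasFDerivAt
  have hderiv : fderiv ℝ (fun x => c * q x ^ 2) = fun y => (2 * c * q y) • fderiv ℝ q y := by
    funext y
    rw [(((hdq y).pow 2).const_mul c).fderiv]
    ext v
    simp only [smul_apply, smul_eq_mul, nsmul_eq_mul]
    push_cast
    ring
  have hd2q : HasFDerivAt (fderiv ℝ q) (fderiv ℝ (fderiv ℝ q) x₀) x₀ :=
    ((hq.fderiv_right (m := 1) le_rfl).differentiable one_ne_zero x₀).hasFDerivAt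
  have hd2 : HasFDerivAt (fun y => (2 * c * q y) • fderiv ℝ q y) (0 : E →L[ℝ] E →L[ℝ] ℝ) x₀ := by
    simpa [hq₀, hdq₀] using ((hdq x₀).const_mul (2 * c)).fun_smul hd2q
  ext m
  simp [iteratedFDeriv_two_apply, hderiv, hd2.fderiv]

theorem ContDiff.add_const_mul_norm_sub_pow_four {E : Type*} [NormedAddCommGroup E]
    [InnerProductSpace ℝ E] {k : WithTop ℕ∞} {φ : E → ℝ} (hφ : ContDiff ℝ k φ) (c : ℝ) (x₀ : E) :
    ContDiff ℝ k fun x => φ x + c * ‖x - x₀‖ ^ 4 := by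
  have hq : ContDiff ℝ k fun x => ‖x - x₀‖ ^ 2 :=
    (contDiff_norm_sq ℝ).comp (contDiff_id.sub contDiff_const)
  simpa only [← pow_mul] using hφ.add (contDiff_const.mul (hq.pow 2))

section Hessian

variable {n : ℕ} {φ : EuclideanSpace ℝ (Fin n) → ℝ}

theorem hess_apply (φ : EuclideanSpace ℝ (Fin n) → ℝ) (x : EuclideanSpace ℝ (Fin n))
    (i j : Fin n) :
    hess φ x i j
      = fderiv ℝ (fderiv ℝ φ) x (EuclideanSpace.single i 1) (EuclideanSpace.single j 1) := by
  simp [hess, iteratedFDeriv_two_apply]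

theorem isHermitian_hess (hφ : ContDiff ℝ 2 φ) (x : EuclideanSpace ℝ (Fin n)) :
    (hess φ x).IsHermitian := by
  have hsymm : IsSymmSndFDerivAt ℝ φ x := hφ.contDiffAt.isSymmSndFDerivAt (by simp)
  ext i j
  simp [hess_apply, hsymm.eq]

theorem continuous_hess (hφ : ContDiff ℝ 2 φ) : Continuous (hess φ) :=
  continuous_pi fun i => continuous_pi fun j =>
    (ContinuousMultilinearMap.apply ℝ _ ℝ
      ![EuclideanSpace.single i 1, EuclideanSpace.single j 1]).continuous.comp
      (hφ.continuous_iteratedFDeriv le_rfl)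

theorem hess_add_const_mul_norm_sub_pow_four (hφ : ContDiff ℝ 2 φ) (c : ℝ)
    (x₀ : EuclideanSpace ℝ (Fin n)) :
    hess (fun x => φ x + c * ‖x - x₀‖ ^ 4) x₀ = hess φ x₀ := by
  have hq : ContDiff ℝ 2 fun x : EuclideanSpace ℝ (Fin n) => ‖x - x₀‖ ^ 2 :=
    (contDiff_norm_sq ℝ).comp (contDiff_id.sub contDiff_const)
  have hdq₀ : fderiv ℝ (fun x : EuclideanSpace ℝ (Fin n) => ‖x - x₀‖ ^ 2) x₀ = 0 :=
    IsLocalMin.fderiv_eq_zero (Filter.Eventually.of_forall fun x => by simp)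
  have hzero := iteratedFDeriv_two_const_mul_sq_eq_zero hq (by simp) hdq₀ c
  have hq4 : ContDiff ℝ 2 fun x : EuclideanSpace ℝ (Fin n) => c * ‖x - x₀‖ ^ 4 := by
    simpa only [← pow_mul] using contDiff_const.mul (hq.pow 2)
  simp only [← pow_mul] at hzero
  ext i j
  simp [hess, fun_iteratedFDeriv_add_apply hφ.contDiffAt hq4.contDiffAt, hzero]

end Hessian

open Filter Topology Metric

theorem exists_tendsto_isLocalMax_sub_of_tendstoUniformlyOn {X ι : Type*} [PseudoMetricSpace X]
    [ProperSpace X] {p : Filter ι} {f : ι → X → ℝ} {F ψ : X → ℝ} {x₀ : X} {r : ℝ} (hr : 0 < r)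
    (hf : ∀ k, ContinuousOn (f k) (closedBall x₀ r)) (hψ : ContinuousOn ψ (closedBall x₀ r))
    (hfF : TendstoUniformlyOn f F p (closedBall x₀ r))
    (hF : ∀ x ∈ closedBall x₀ r, F x - ψ x + dist x x₀ ^ 4 ≤ F x₀ - ψ x₀) :
    ∃ x : ι → X, Tendsto x p (𝓝 x₀) ∧ ∀ᶠ k in p, IsLocalMax (fun y => f k y - ψ y) (x k) := by
  have hx₀ : x₀ ∈ closedBall x₀ r := mem_closedBall_self hr.le
  choose x hxK hxmax using fun k =>
    (isCompact_closedBall x₀ r).exists_isMaxOn ⟨x₀, hx₀⟩ ((hf k).sub hψ)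
  -- `x k` maximizes `f k - ψ`, so the gap `dist ^ 4` of `F - ψ` is at most twice the uniform error
  have hdist : ∀ η > 0, ∀ᶠ k in p, dist (x k) x₀ ^ 4 < 2 * η := fun η hη => by
    filter_upwards [tendstoUniformlyOn_iff.mp hfF η hη] with k hk
    have h₁ := abs_lt.mp (Real.dist_eq _ _ ▸ hk _ (hxK k))
    have h₂ := abs_lt.mp (Real.dist_eq _ _ ▸ hk _ hx₀)
    have h₃ : f k x₀ - ψ x₀ ≤ f k (x k) - ψ (x k) := hxmax k hx₀
    linarith [hF _ (hxK k)]
  have hx : Tendsto x p (𝓝 x₀) := tendsto_nhds.mpr fun ε hε => by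
    filter_upwards [hdist (ε ^ 4 / 2) (by positivity)] with k hk
    exact (pow_lt_pow_iff_left₀ dist_nonneg hε.le four_ne_zero).mp (by linarith)
  refine ⟨x, hx, ?_⟩
  filter_upwards [hx (ball_mem_nhds x₀ hr)] with k hk
  exact (hxmax k).isLocalMax (mem_of_superset (isOpen_ball.mem_nhds hk) ball_subset_closedBall)

theorem exists_tendsto_isLocalMax_sub_add_norm_sub_pow_four {E ι : Type*}
    [NormedAddCommGroup E] [ProperSpace E] {p : Filter ι} {Ω : Set E} (hΩ : IsOpen Ω)
    {uk : ι → E → ℝ} {u φ : E → ℝ} (huk : ∀ k, ContinuousOn (uk k) Ω)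
    (hu : TendstoLocallyUniformlyOn uk u p Ω) (hφ : Continuous φ) {x₀ : E} (hx₀ : x₀ ∈ Ω)
    (hmax : IsLocalMax (fun x => u x - φ x) x₀) :
    ∃ x : ι → E, Tendsto x p (𝓝 x₀) ∧
      ∀ᶠ k in p, x k ∈ Ω ∧ IsLocalMax (fun y => uk k y - (φ y + ‖y - x₀‖ ^ 4)) (x k) := by
  obtain ⟨r, hr, hrΩ⟩ := nhds_basis_closedBall.eventually_iff.mp (hmax.and (hΩ.mem_nhds hx₀))
  have hKΩ : closedBall x₀ r ⊆ Ω := fun y hy => (hrΩ hy).2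
  obtain ⟨x, hx, hmaxk⟩ := exists_tendsto_isLocalMax_sub_of_tendstoUniformlyOn hr
    (ψ := fun y => φ y + ‖y - x₀‖ ^ 4) (fun k => (huk k).mono hKΩ)
    (hφ.add ((continuous_id.sub continuous_const).norm.pow 4)).continuousOn
    ((tendstoLocallyUniformlyOn_iff_forall_isCompact hΩ).mp hu _ hKΩ (isCompact_closedBall x₀ r))
    fun y hy => by
      have := (hrΩ hy).1
      simp only [dist_eq_norm, sub_self, norm_zero]
      linarith
  exact ⟨x, hx, (hx.eventually_mem (hΩ.mem_nhds hx₀)).and hmaxk⟩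

section Stability

variable {n : ℕ} {lam Lam : ℝ} {Ω : Set (EuclideanSpace ℝ (Fin n))} {ι : Type*} {p : Filter ι}
  {uk gk : ι → EuclideanSpace ℝ (Fin n) → ℝ} {u g : EuclideanSpace ℝ (Fin n) → ℝ}

theorem tendsto_pucciMax_hess_add (hL : lam ≤ Lam) {ψ : EuclideanSpace ℝ (Fin n) → ℝ}
    (hψ : ContDiff ℝ 2 ψ) (hgk : ∀ k, ContinuousOn (gk k) Ω)
    (hg : TendstoLocallyUniformlyOn gk g p Ω) [p.NeBot] {x : ι → EuclideanSpace ℝ (Fin n)}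
    {x₀ : EuclideanSpace ℝ (Fin n)} (hx₀ : x₀ ∈ Ω) (hx : Tendsto x p (𝓝 x₀))
    (hxΩ : ∀ᶠ k in p, x k ∈ Ω) :
    Tendsto (fun k => pucciMax lam Lam (hess ψ (x k)) + gk k (x k)) p
      (𝓝 (pucciMax lam Lam (hess ψ x₀) + g x₀)) := by
  have hpucci : Continuous fun y => pucciMax lam Lam (hess ψ y) :=
    (Matrix.continuousOn_pucciMax hL).comp_continuous (continuous_hess hψ) (isHermitian_hess hψ)
  have hgc : ContinuousOn g Ω := hg.continuousOn (Frequently.of_forall hgk)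
  exact ((hpucci.tendsto x₀).comp hx).add
    (hg.tendsto_comp (hgc x₀ hx₀) hx₀ (tendsto_nhdsWithin_iff.mpr ⟨hx, hxΩ⟩))

theorem PucciSubsol.of_tendstoLocallyUniformlyOn [p.NeBot] (hL : lam ≤ Lam) (hΩ : IsOpen Ω)
    (huk : ∀ k, ContinuousOn (uk k) Ω) (hgk : ∀ k, ContinuousOn (gk k) Ω)
    (hu : TendstoLocallyUniformlyOn uk u p Ω) (hg : TendstoLocallyUniformlyOn gk g p Ω)
    (hsub : ∀ k, PucciSubsol lam Lam Ω (uk k) (gk k)) : PucciSubsol lam Lam Ω u g := by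
  intro x₀ hx₀ φ hφ hmax
  obtain ⟨x, hx, hxk⟩ :=
    exists_tendsto_isLocalMax_sub_add_norm_sub_pow_four hΩ huk hu hφ.continuous hx₀ hmax
  have hψ : ContDiff ℝ 2 fun y => φ y + ‖y - x₀‖ ^ 4 := by
    simpa using hφ.add_const_mul_norm_sub_pow_four 1 x₀
  have hhess : hess (fun y => φ y + ‖y - x₀‖ ^ 4) x₀ = hess φ x₀ := by
    simpa using hess_add_const_mul_norm_sub_pow_four hφ 1 x₀
  have hlim := tendsto_pucciMax_hess_add hL hψ hgk hg hx₀ hx (hxk.mono fun k hk => hk.1)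
  rw [hhess] at hlim
  exact ge_of_tendsto hlim (hxk.mono fun k hk => hsub k (x k) hk.1 _ hψ hk.2)

theorem PucciSupersol.of_tendstoLocallyUniformlyOn [p.NeBot] (hL : lam ≤ Lam) (hΩ : IsOpen Ω)
    (huk : ∀ k, ContinuousOn (uk k) Ω) (hgk : ∀ k, ContinuousOn (gk k) Ω)
    (hu : TendstoLocallyUniformlyOn uk u p Ω) (hg : TendstoLocallyUniformlyOn gk g p Ω)
    (hsup : ∀ k, PucciSupersol lam Lam Ω (uk k) (gk k)) : PucciSupersol lam Lam Ω u g := by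
  intro x₀ hx₀ φ hφ hmin
  have hmax : IsLocalMax (fun x => -u x - -φ x) x₀ := by
    simpa only [neg_sub, sub_neg_eq_add, neg_add_eq_sub] using hmin.neg
  obtain ⟨x, hx, hxk⟩ := exists_tendsto_isLocalMax_sub_add_norm_sub_pow_four hΩ
    (fun k => (huk k).neg) hu.fun_neg hφ.continuous.neg hx₀ hmax
  have hψ := hφ.add_const_mul_norm_sub_pow_four (-1) x₀
  have hlim := tendsto_pucciMax_hess_add hL hψ hgk hg hx₀ hx (hxk.mono fun k hk => hk.1)
  rw [hess_add_const_mul_norm_sub_pow_four hφ (-1) x₀] at hlim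
  refine le_of_tendsto hlim (hxk.mono fun k hk => hsup k (x k) hk.1 _ hψ ?_)
  simpa [sub_eq_add_neg, add_comm] using hk.2.neg

end Stability

open Filter in
theorem stmt12_general (n : ℕ) (lam Lam : ℝ) (hLam : lam ≤ Lam)
    (Ω : Set (EuclideanSpace ℝ (Fin n))) (hΩ : IsOpen Ω)
    (uk gk : ℕ → EuclideanSpace ℝ (Fin n) → ℝ)
    (huk : ∀ k, ContinuousOn (uk k) Ω) (hgk : ∀ k, ContinuousOn (gk k) Ω)
    (u g : EuclideanSpace ℝ (Fin n) → ℝ)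
    (huconv : ∀ K ⊆ Ω, IsCompact K → TendstoUniformlyOn uk u atTop K)
    (hgconv : ∀ K ⊆ Ω, IsCompact K → TendstoUniformlyOn gk g atTop K) :
    ((∀ k, PucciSubsol lam Lam Ω (uk k) (gk k)) → PucciSubsol lam Lam Ω u g) ∧
    ((∀ k, PucciSupersol lam Lam Ω (uk k) (gk k)) → PucciSupersol lam Lam Ω u g) ∧
    ((∀ k, PucciSubsol lam Lam Ω (uk k) (gk k) ∧ PucciSupersol lam Lam Ω (uk k) (gk k)) →
      PucciSubsol lam Lam Ω u g ∧ PucciSupersol lam Lam Ω u g) := by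
  have hu := (tendstoLocallyUniformlyOn_iff_forall_isCompact hΩ).mpr huconv
  have hg := (tendstoLocallyUniformlyOn_iff_forall_isCompact hΩ).mpr hgconv
  have hsub := PucciSubsol.of_tendstoLocallyUniformlyOn hLam hΩ huk hgk hu hg
  have hsup := PucciSupersol.of_tendstoLocallyUniformlyOn hLam hΩ huk hgk hu hg
  exact ⟨hsub, hsup, fun h => ⟨hsub fun k => (h k).1, hsup fun k => (h k).2⟩⟩

open Filter in
theorem stmt12 (n : ℕ) (lam Lam : ℝ) (hlam : 0 < lam) (hLam : lam ≤ Lam)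
    (Ω : Set (EuclideanSpace ℝ (Fin n))) (hΩ : IsOpen Ω)
    (uk gk : ℕ → EuclideanSpace ℝ (Fin n) → ℝ)
    (huk : ∀ k, ContinuousOn (uk k) Ω) (hgk : ∀ k, ContinuousOn (gk k) Ω)
    (u g : EuclideanSpace ℝ (Fin n) → ℝ)
    (huconv : ∀ K ⊆ Ω, IsCompact K → TendstoUniformlyOn uk u atTop K)
    (hgconv : ∀ K ⊆ Ω, IsCompact K → TendstoUniformlyOn gk g atTop K) :
    ((∀ k, PucciSubsol lam Lam Ω (uk k) (gk k)) → PucciSubsol lam Lam Ω u g) ∧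
    ((∀ k, PucciSupersol lam Lam Ω (uk k) (gk k)) → PucciSupersol lam Lam Ω u g) ∧
    ((∀ k, PucciSubsol lam Lam Ω (uk k) (gk k) ∧ PucciSupersol lam Lam Ω (uk k) (gk k)) →
      PucciSubsol lam Lam Ω u g ∧ PucciSupersol lam Lam Ω u g) :=
  stmt12_general n lam Lam hLam Ω hΩ uk gk huk hgk u g huconv hgconv
end

section
/- (Doubling lemma) Let (X, d) be a complete metric space, let Σ ⊆ X be closed and ∅ ≠ D ⊆ Σ, and set Γ = Σ \ D. Let M : D → (0,∞) be bounded on compact subsets of D, and let k > 0. If y ∈ D satisfies M(y) · dist(y, Γ) > 2k, then there exists x ∈ D such that M(x) · dist(x, Γ) > 2k, M(x) ≥ M(y), and M(z) ≤ 2 M(x) for every z ∈ D with d(z, x) ≤ k / M(x). (Here dist(·, Γ) is interpreted as +∞ if Γ = ∅.) -/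
/-!
Suppose no such `x` exists. Starting from `y`, each point `x` satisfying the first two
conclusions then has a witness `z` with `d(z, x) ≤ k / M(x)` and `M(z) > 2 M(x)`; since
`dist(x, Γ) > 2k / M(x)`, the witness again satisfies both conclusions. Iterating gives a
sequence along which `M` at least doubles while the steps shrink geometrically, so it
converges to some `a` with `d(y, a) ≤ 2k / M(y) < dist(y, Γ)`. As `Σ` is closed, `a ∈ D`,
and then `M` is unbounded on the compact set formed by the sequence and its limit.
-/

open Metric Filter Topology

lemma ENNReal.ofReal_div_lt_iff {a : ENNReal} {b c : ℝ} (hc : 0 < c) :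
    ENNReal.ofReal (b / c) < a ↔ ENNReal.ofReal b < ENNReal.ofReal c * a := by
  rw [ENNReal.ofReal_div_of_pos hc,
    ENNReal.div_lt_iff (.inl (by simpa using hc)) (.inl ENNReal.ofReal_ne_top), mul_comm]

lemma ofReal_lt_mul_infEDist_of_dist_le {X : Type*} [PseudoMetricSpace X] {Γ : Set X}
    {x z : X} {m m' k : ℝ} (hm : 0 < m) (hmm' : 2 * m ≤ m') (hzx : dist z x ≤ k / m)
    (hx : ENNReal.ofReal (2 * k) < ENNReal.ofReal m * infEDist x Γ) :
    ENNReal.ofReal (2 * k) < ENNReal.ofReal m' * infEDist z Γ := by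
  have hkm : 0 ≤ k / m := dist_nonneg.trans hzx
  rw [← ENNReal.ofReal_div_lt_iff hm] at hx
  rw [← ENNReal.ofReal_div_lt_iff (by linarith)]
  have hz : ENNReal.ofReal (k / m) < infEDist z Γ := by
    refine (ENNReal.add_lt_add_iff_right (ENNReal.ofReal_ne_top (r := k / m))).1 ?_
    calc ENNReal.ofReal (k / m) + ENNReal.ofReal (k / m) = ENNReal.ofReal (2 * k / m) := by
          rw [← ENNReal.ofReal_add hkm hkm]; congr 1; ring
      _ < infEDist x Γ := hx
      _ ≤ infEDist z Γ + edist x z := infEDist_le_infEDist_add_edist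
      _ ≤ infEDist z Γ + ENNReal.ofReal (k / m) := by
          rw [edist_dist, dist_comm]; gcongr
  refine lt_of_le_of_lt (ENNReal.ofReal_le_ofReal ?_) hz
  calc 2 * k / m' = k / m * (2 * m / m') := by field_simp
    _ ≤ k / m := mul_le_of_le_one_right hkm ((div_le_one (by linarith)).2 hmm')

lemma notMem_of_dist_le_div_of_ofReal_lt_mul_infEDist {X : Type*} [PseudoMetricSpace X]
    {Γ : Set X} {y a : X} {m r : ℝ} (hm : 0 < m)
    (hy : ENNReal.ofReal r < ENNReal.ofReal m * infEDist y Γ) (hya : dist y a ≤ r / m) :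
    a ∉ Γ := fun haΓ ↦ by
  rw [← ENNReal.ofReal_div_lt_iff hm] at hy
  refine (hy.trans_le (infEDist_le_edist_of_mem haΓ)).not_ge ?_
  rw [edist_dist]
  exact ENNReal.ofReal_le_ofReal hya

lemma two_pow_mul_le_of_two_mul_le {m : ℕ → ℝ} (hm : ∀ n, 2 * m n ≤ m (n + 1)) (n : ℕ) :
    2 ^ n * m 0 ≤ m n := by
  induction n with
  | zero => simp
  | succ n ih =>
    calc 2 ^ (n + 1) * m 0 = 2 * (2 ^ n * m 0) := by ring
      _ ≤ 2 * m n := by linarith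
      _ ≤ m (n + 1) := hm n

lemma tendsto_atTop_of_two_mul_le {m : ℕ → ℝ} (h0 : 0 < m 0)
    (hm : ∀ n, 2 * m n ≤ m (n + 1)) : Tendsto m atTop atTop :=
  tendsto_atTop_mono (two_pow_mul_le_of_two_mul_le hm)
    ((tendsto_pow_atTop_atTop_of_one_lt one_lt_two).atTop_mul_const h0)

lemma exists_tendsto_of_dist_le_div_of_two_mul_le {X : Type*} [PseudoMetricSpace X]
    [CompleteSpace X] {u : ℕ → X} {m : ℕ → ℝ} {k : ℝ} (hk : 0 ≤ k) (h0 : 0 < m 0)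
    (hm : ∀ n, 2 * m n ≤ m (n + 1)) (hu : ∀ n, dist (u n) (u (n + 1)) ≤ k / m n) :
    ∃ a, Tendsto u atTop (𝓝 a) ∧ dist (u 0) a ≤ 2 * k / m 0 := by
  have hgeom : ∀ n, dist (u n) (u (n + 1)) ≤ 2 * k / m 0 / 2 / 2 ^ n := fun n ↦ by
    calc dist (u n) (u (n + 1)) ≤ k / m n := hu n
      _ ≤ k / (2 ^ n * m 0) :=
          div_le_div_of_nonneg_left hk (by positivity) (two_pow_mul_le_of_two_mul_le hm n)
      _ = 2 * k / m 0 / 2 / 2 ^ n := by field_simp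
  obtain ⟨a, ha⟩ := cauchySeq_tendsto_of_complete (cauchySeq_of_le_geometric_two hgeom)
  exact ⟨a, ha, dist_le_of_le_geometric_two_of_tendsto₀ hgeom ha⟩

theorem stmt13_general {X : Type*} [MetricSpace X] [CompleteSpace X]
    (S D : Set X) (hS : IsClosed S) (hDS : D ⊆ S)
    (M : X → ℝ) (hMpos : ∀ z ∈ D, 0 < M z)
    (hMbdd : ∀ K ⊆ D, IsCompact K → ∃ C : ℝ, ∀ z ∈ K, M z ≤ C)
    (k : ℝ) (hk : 0 < k)
    (y : X) (hy : y ∈ D)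
    (hyfar : ENNReal.ofReal (2 * k) < ENNReal.ofReal (M y) * EMetric.infEdist y (S \ D)) :
    ∃ x ∈ D, ENNReal.ofReal (2 * k) < ENNReal.ofReal (M x) * EMetric.infEdist x (S \ D) ∧
      M y ≤ M x ∧ ∀ z ∈ D, dist z x ≤ k / M x → M z ≤ 2 * M x := by
  by_contra! hcon
  let Q x := x ∈ D ∧ M y ≤ M x ∧
    ENNReal.ofReal (2 * k) < ENNReal.ofReal (M x) * infEDist x (S \ D)
  have step : ∀ x, Q x → ∃ z, Q z ∧ dist z x ≤ k / M x ∧ 2 * M x ≤ M z := by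
    rintro x ⟨hxD, hyx, hx⟩
    obtain ⟨z, hzD, hzx, hMz⟩ := hcon x hxD hx hyx
    have hMx := hMpos x hxD
    exact ⟨z, ⟨hzD, by linarith, ofReal_lt_mul_infEDist_of_dist_le hMx hMz.le hzx hx⟩,
      hzx, hMz.le⟩
  choose! f hfQ hfdist hfM using step
  set u : ℕ → X := fun n ↦ f^[n] y
  have hu_succ (n : ℕ) : u (n + 1) = f (u n) := Function.iterate_succ_apply' f n y
  have hQu (n : ℕ) : Q (u n) := by
    induction n with
    | zero => exact ⟨hy, le_rfl, hyfar⟩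
    | succ n ih => rw [hu_succ]; exact hfQ _ ih
  have hM_double (n : ℕ) : 2 * M (u n) ≤ M (u (n + 1)) := hu_succ n ▸ hfM _ (hQu n)
  obtain ⟨a, hua, hya⟩ :=
    exists_tendsto_of_dist_le_div_of_two_mul_le (u := u) (m := M ∘ u) hk.le (hMpos y hy)
      hM_double fun n ↦ by rw [dist_comm, hu_succ]; exact hfdist _ (hQu n)
  have haD : a ∈ D := by
    by_contra haD
    have haS : a ∈ S := hS.mem_of_tendsto hua (.of_forall fun n ↦ hDS (hQu n).1)
    exact notMem_of_dist_le_div_of_ofReal_lt_mul_infEDist (hMpos y hy) hyfar hya ⟨haS, haD⟩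
  obtain ⟨C, hC⟩ := hMbdd _ (Set.insert_subset haD (Set.range_subset_iff.2 fun n ↦ (hQu n).1))
    hua.isCompact_insert_range
  obtain ⟨n, hn⟩ :=
    ((tendsto_atTop_of_two_mul_le (hMpos y hy) hM_double).eventually_gt_atTop C).exists
  exact hn.not_ge (hC _ (Set.mem_insert_of_mem _ (Set.mem_range_self n)))

theorem stmt13 {X : Type*} [MetricSpace X] [CompleteSpace X]
    (S D : Set X) (hS : IsClosed S) (hD : D.Nonempty) (hDS : D ⊆ S)
    (M : X → ℝ) (hMpos : ∀ z ∈ D, 0 < M z)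
    (hMbdd : ∀ K ⊆ D, IsCompact K → ∃ C : ℝ, ∀ z ∈ K, M z ≤ C)
    (k : ℝ) (hk : 0 < k)
    (y : X) (hy : y ∈ D)
    (hyfar : ENNReal.ofReal (2 * k) < ENNReal.ofReal (M y) * EMetric.infEdist y (S \ D)) :
    ∃ x ∈ D, ENNReal.ofReal (2 * k) < ENNReal.ofReal (M x) * EMetric.infEdist x (S \ D) ∧
      M y ≤ M x ∧ ∀ z ∈ D, dist z x ≤ k / M x → M z ≤ 2 * M x :=
  stmt13_general S D hS hDS M hMpos hMbdd k hk y hy hyfar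
end
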